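/- arXiv:1111.3991 — 4 statements merged into one kernel-verified Lean document; each statement's English description precedes it below -/
import Mathlib

section
/- For every finite connected graph G=(V,E) with positive weights W, every u∈ℋ₀ and every i₀∈V, the integrand of the limiting measure is dominated by a Gaussian: e^{u_{i₀}} e^{-H(W,u)} √(D(W,u)) ≤ (Σ_{i∈V} (e^{N u_i} + e^{−N u_i})) · exp(−(1/2) Σ_{{i,j}∈E} W_{ij}(u_i−u_j)²) · √(D(W,0)). -/
open MeasureTheory Real Filter

noncomputable section

variable {V : Type*} [Fintype V] [DecidableEq V]

/-- `H(W,u) = 2 Σ_{{i,j} ∈ E} W_{ij} sinh²((uᵢ-uⱼ)/2)`, written as a double sum over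
ordered pairs (each edge counted twice; `W i j = 0` off edges). -/
def Hfun (W : V → V → ℝ) (u : V → ℝ) : ℝ :=
  ∑ i, ∑ j, W i j * Real.sinh ((u i - u j) / 2) ^ 2

/-- The weighted graph Laplacian of the conductances `W_{ij} e^{uᵢ+uⱼ}`. -/
def lapl (W : V → V → ℝ) (u : V → ℝ) : Matrix V V ℝ :=
  Matrix.of fun i j =>
    if i = j then ∑ k, W i k * Real.exp (u i + u k)
    else -(W i j * Real.exp (u i + u j))

/-- `D(W,u)`: the diagonal minor at `j₀` of the weighted Laplacian of the conductances
`W_{ij} e^{uᵢ+uⱼ}`; by the matrix-tree theorem it equals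
`Σ_{spanning trees T} ∏_{{i,j} ∈ T} W_{ij} e^{uᵢ+uⱼ}` (and does not depend on `j₀`). -/
def Dfun (j₀ : V) (W : V → V → ℝ) (u : V → ℝ) : ℝ :=
  ((lapl W u).submatrix (fun i : {i : V // i ≠ j₀} => (i : V))
    (fun i : {i : V // i ≠ j₀} => (i : V))).det

/-!
Since `sinh² (x/2) ≥ x²/4`, the factor `e^{-H(W,u)}` is at most the Gaussian factor. The
Laplacian with conductances `W_{ij} e^{uᵢ+uⱼ}` is increasing in `u` for the Loewner order, and the
determinant is monotone on positive semidefinite matrices, so with `m = maxᵢ uᵢ` we get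
`D(W,u) ≤ D(W,m) = e^{2m(N-1)} D(W,0)`. Finally `e^{u_{i₀}} e^{m(N-1)} ≤ e^{Nm}`, one of the terms
of the sum.
-/

open Matrix
open scoped MatrixOrder

namespace Matrix

theorem submatrix_le_submatrix {m n : Type*} {A B : Matrix n n ℝ} (h : A ≤ B)
    (e : m → n) : A.submatrix e e ≤ B.submatrix e e :=
  le_iff.mpr ((le_iff.mp h).submatrix e)

variable {n : Type*} [Fintype n] [DecidableEq n]

theorem one_le_det_of_one_le {C : Matrix n n ℝ} (hC : 1 ≤ C) : 1 ≤ C.det := by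
  have hpsd : C.PosSemidef := nonneg_iff_posSemidef.mp (zero_le_one.trans hC)
  rw [hpsd.1.det_eq_prod_eigenvalues]
  refine Finset.one_le_prod fun i _ => ?_
  have h := (algebraMap_le_iff_le_spectrum (R := ℝ) (r := 1) (a := C)).mp
    (by simpa using hC) _ (hpsd.1.eigenvalues_mem_spectrum_real i)
  exact_mod_cast h

theorem det_le_det_of_le {A B : Matrix n n ℝ} (hA : 0 ≤ A) (hAB : A ≤ B) : A.det ≤ B.det := by
  have hB : B.PosSemidef := nonneg_iff_posSemidef.mp (hA.trans hAB)
  by_cases hdet : A.det = 0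
  · exact hdet ▸ hB.det_nonneg
  -- conjugating by `S⁻¹`, where `S = √A`, reduces to the case `A = 1`
  set S := CFC.sqrt A
  have hSS : S * S = A := CFC.sqrt_mul_sqrt_self A
  have hS : IsUnit S.det := by
    rw [← isUnit_iff_isUnit_det, CFC.isUnit_sqrt_iff A, isUnit_iff_isUnit_det]
    exact isUnit_iff_ne_zero.mpr hdet
  have hT : (S⁻¹).IsHermitian := (nonneg_iff_posSemidef.mp (CFC.sqrt_nonneg A)).1.inv
  have hconj : 1 ≤ S⁻¹ * B * S⁻¹ := by
    have h : S⁻¹ * A * S⁻¹ = 1 := by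
      rw [← hSS, ← Matrix.mul_assoc, nonsing_inv_mul _ hS, one_mul, mul_nonsing_inv _ hS]
    exact h ▸ IsSelfAdjoint.conjugate_le_conjugate hAB hT
  have hB' : 1 ≤ S⁻¹.det ^ 2 * B.det := by
    simpa only [det_mul, sq, mul_comm, mul_left_comm] using one_le_det_of_one_le hconj
  have hA' : A.det = S.det ^ 2 := by rw [← hSS, det_mul, sq]
  have hinv : S⁻¹.det * S.det = 1 := by rw [← det_mul, nonsing_inv_mul _ hS, det_one]
  calc A.det = S.det ^ 2 * 1 := by rw [hA', mul_one]
    _ ≤ S.det ^ 2 * (S⁻¹.det ^ 2 * B.det) := by gcongr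
    _ = (S⁻¹.det * S.det) ^ 2 * B.det := by ring
    _ = B.det := by rw [hinv, one_pow, one_mul]

end Matrix

def conductanceLaplacian (c : V → V → ℝ) : Matrix V V ℝ :=
  Matrix.of fun i j => if i = j then ∑ k, c i k else -c i j

theorem conductanceLaplacian_eq (c : V → V → ℝ) :
    conductanceLaplacian c = diagonal (fun i => ∑ k, c i k + c i i) - Matrix.of c := by
  ext i j
  by_cases h : i = j
  · subst h; simp [conductanceLaplacian]
  · simp [conductanceLaplacian, h]

theorem conductanceLaplacian_sub (c d : V → V → ℝ) :
    conductanceLaplacian c - conductanceLaplacian d = conductanceLaplacian (c - d) := by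
  ext i j
  by_cases h : i = j
  · simp [conductanceLaplacian, h, Finset.sum_sub_distrib]
  · simp [conductanceLaplacian, h]; ring

theorem dotProduct_conductanceLaplacian_mulVec (c : V → V → ℝ) (x : V → ℝ) :
    x ⬝ᵥ (conductanceLaplacian c *ᵥ x) =
      ∑ i, ∑ j, c i j * (x i ^ 2 - x i * x j) + ∑ i, c i i * x i ^ 2 := by
  rw [conductanceLaplacian_eq, sub_mulVec, dotProduct_sub]
  simp only [dotProduct, mulVec, diagonal_apply, of_apply, ite_mul, zero_mul, Finset.sum_ite_eq,
    Finset.mem_univ, if_true, mul_sub, Finset.sum_sub_distrib, Finset.mul_sum, Finset.sum_mul,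
    add_mul, mul_add, Finset.sum_add_distrib]
  have hsq : ∑ i, ∑ j, x i * (c i j * x i) = ∑ i, ∑ j, c i j * x i ^ 2 :=
    Finset.sum_congr rfl fun i _ => Finset.sum_congr rfl fun j _ => by ring
  have hdiag : ∑ i, x i * (c i i * x i) = ∑ i, c i i * x i ^ 2 :=
    Finset.sum_congr rfl fun i _ => by ring
  have hcross : ∑ i, ∑ j, x i * (c i j * x j) = ∑ i, ∑ j, c i j * (x i * x j) :=
    Finset.sum_congr rfl fun i _ => Finset.sum_congr rfl fun j _ => by ring
  rw [hsq, hdiag, hcross]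
  ring

theorem conductanceLaplacian_posSemidef {c : V → V → ℝ} (hsymm : ∀ i j, c i j = c j i)
    (hnonneg : ∀ i j, 0 ≤ c i j) : (conductanceLaplacian c).PosSemidef := by
  refine posSemidef_iff_dotProduct_mulVec.mpr ⟨?_, fun x => ?_⟩
  · ext i j
    by_cases h : i = j
    · simp [conductanceLaplacian, h]
    · simp [conductanceLaplacian, h, Ne.symm h, hsymm i j]
  rw [star_trivial, dotProduct_conductanceLaplacian_mulVec]
  -- symmetrising the double sum turns it into `½ ∑ᵢⱼ cᵢⱼ (xᵢ - xⱼ)²`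
  have hsym : 2 * ∑ i, ∑ j, c i j * (x i ^ 2 - x i * x j) =
      ∑ i, ∑ j, c i j * (x i - x j) ^ 2 := by
    conv_lhs => rw [two_mul]; enter [2]; rw [Finset.sum_comm]
    simp only [← Finset.sum_add_distrib]
    exact Finset.sum_congr rfl fun i _ => Finset.sum_congr rfl fun j _ => by rw [hsymm j i]; ring
  have hoff : 0 ≤ ∑ i, ∑ j, c i j * (x i - x j) ^ 2 :=
    Finset.sum_nonneg fun i _ => Finset.sum_nonneg fun j _ =>
      mul_nonneg (hnonneg i j) (sq_nonneg _)
  have hdiag : 0 ≤ ∑ i, c i i * x i ^ 2 :=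
    Finset.sum_nonneg fun i _ => mul_nonneg (hnonneg i i) (sq_nonneg _)
  linarith

theorem conductanceLaplacian_mono {c d : V → V → ℝ} (hc : ∀ i j, c i j = c j i)
    (hd : ∀ i j, d i j = d j i) (hcd : ∀ i j, c i j ≤ d i j) :
    conductanceLaplacian c ≤ conductanceLaplacian d := by
  rw [le_iff, conductanceLaplacian_sub]
  exact conductanceLaplacian_posSemidef (fun i j => by simp [hc, hd])
    fun i j => sub_nonneg.2 (hcd i j)

section WeightedLaplacian

variable {W : V → V → ℝ} (hsymm : ∀ i j, W i j = W j i) (hnonneg : ∀ i j, 0 ≤ W i j)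
include hsymm hnonneg

theorem lapl_posSemidef (u : V → ℝ) : (lapl W u).PosSemidef :=
  conductanceLaplacian_posSemidef (fun i j => by rw [hsymm, add_comm])
    fun i j => mul_nonneg (hnonneg i j) (exp_pos _).le

theorem lapl_mono {u v : V → ℝ} (huv : ∀ i, u i ≤ v i) : lapl W u ≤ lapl W v :=
  conductanceLaplacian_mono (fun i j => by rw [hsymm, add_comm])
    (fun i j => by rw [hsymm, add_comm]) fun i j =>
      mul_le_mul_of_nonneg_left (exp_le_exp.2 (add_le_add (huv i) (huv j))) (hnonneg i j)

theorem Dfun_mono (j₀ : V) {u v : V → ℝ} (huv : ∀ i, u i ≤ v i) : Dfun j₀ W u ≤ Dfun j₀ W v :=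
  det_le_det_of_le (nonneg_iff_posSemidef.mpr ((lapl_posSemidef hsymm hnonneg u).submatrix _))
    (submatrix_le_submatrix (lapl_mono hsymm hnonneg huv) _)

end WeightedLaplacian

theorem lapl_const (W : V → V → ℝ) (a : ℝ) :
    lapl W (fun _ => a) = exp (2 * a) • lapl W (fun _ => 0) := by
  ext i j
  simp only [lapl, Matrix.smul_apply, of_apply, smul_eq_mul, add_zero, exp_zero, two_mul]
  split_ifs
  · rw [Finset.mul_sum]
    exact Finset.sum_congr rfl fun k _ => by ring
  · ring

theorem sqrt_Dfun_const (j₀ : V) (W : V → V → ℝ) (a : ℝ) :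
    sqrt (Dfun j₀ W (fun _ => a)) =
      exp a ^ (Fintype.card V - 1) * sqrt (Dfun j₀ W fun _ => 0) := by
  have hexp : exp (2 * a) ^ (Fintype.card V - 1) = (exp a ^ (Fintype.card V - 1)) ^ 2 := by
    rw [two_mul, exp_add, ← sq, ← pow_mul, ← pow_mul, mul_comm]
  rw [Dfun, Dfun, lapl_const, submatrix_smul, Pi.smul_apply, Pi.smul_apply, det_smul,
    Fintype.card_subtype_compl, Fintype.card_subtype_eq, hexp, sqrt_mul (by positivity),
    sqrt_sq (by positivity)]

theorem sq_le_sinh_sq (x : ℝ) : x ^ 2 ≤ sinh x ^ 2 :=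
  sq_le_sq.mpr (by rw [abs_sinh]; exact self_le_sinh_iff.mpr (abs_nonneg x))

omit [DecidableEq V] in
theorem quarter_sum_sq_le_Hfun {W : V → V → ℝ} (hnonneg : ∀ i j, 0 ≤ W i j) (u : V → ℝ) :
    1 / 4 * ∑ i, ∑ j, W i j * (u i - u j) ^ 2 ≤ Hfun W u := by
  rw [Hfun, Finset.mul_sum]
  refine Finset.sum_le_sum fun i _ => ?_
  rw [Finset.mul_sum]
  refine Finset.sum_le_sum fun j _ => ?_
  calc 1 / 4 * (W i j * (u i - u j) ^ 2) = W i j * ((u i - u j) / 2) ^ 2 := by ring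
    _ ≤ W i j * sinh ((u i - u j) / 2) ^ 2 :=
      mul_le_mul_of_nonneg_left (sq_le_sinh_sq _) (hnonneg i j)

theorem integrand_gaussian_domination_general (G : SimpleGraph V)
    (W : V → V → ℝ) (hWsymm : ∀ i j, W i j = W j i)
    (hWpos : ∀ i j, G.Adj i j → 0 < W i j)
    (hWzero : ∀ i j, ¬ G.Adj i j → W i j = 0)
    (u : V → ℝ) (i₀ j₀ : V) :
    Real.exp (u i₀) * Real.exp (-Hfun W u) * Real.sqrt (Dfun j₀ W u) ≤
      (∑ i, (Real.exp ((Fintype.card V : ℝ) * u i) +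
        Real.exp (-((Fintype.card V : ℝ) * u i)))) *
        Real.exp (-((1 / 4) * ∑ i, ∑ j, W i j * (u i - u j) ^ 2)) *
        Real.sqrt (Dfun j₀ W (fun _ => 0)) := by
  have hWnonneg : ∀ i j, 0 ≤ W i j := fun i j => by
    by_cases h : G.Adj i j
    · exact (hWpos i j h).le
    · exact (hWzero i j h).ge
  have : Nonempty V := ⟨i₀⟩
  obtain ⟨i₁, hmax⟩ := Finite.exists_max u
  set N := Fintype.card V
  have hD : sqrt (Dfun j₀ W u) ≤ exp (u i₁) ^ (N - 1) * sqrt (Dfun j₀ W fun _ => 0) :=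
    sqrt_Dfun_const j₀ W (u i₁) ▸ sqrt_le_sqrt (Dfun_mono hWsymm hWnonneg j₀ hmax)
  have hH : exp (-Hfun W u) ≤ exp (-(1 / 4 * ∑ i, ∑ j, W i j * (u i - u j) ^ 2)) :=
    exp_le_exp.mpr (neg_le_neg (quarter_sum_sq_le_Hfun hWnonneg u))
  have hmass : exp (u i₀) * exp (u i₁) ^ (N - 1) ≤ ∑ i, (exp (N * u i) + exp (-(N * u i))) :=
    calc exp (u i₀) * exp (u i₁) ^ (N - 1) ≤ exp (u i₁) * exp (u i₁) ^ (N - 1) := by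
          gcongr; exact hmax i₀
      _ = exp (N * u i₁) := by
          rw [← pow_succ', Nat.sub_add_cancel Fintype.card_pos, exp_nat_mul]
      _ ≤ exp (N * u i₁) + exp (-(N * u i₁)) := le_add_of_nonneg_right (exp_pos _).le
      _ ≤ _ := Finset.single_le_sum (f := fun i => exp (N * u i) + exp (-(N * u i)))
          (fun i _ => by positivity) (Finset.mem_univ i₁)
  calc exp (u i₀) * exp (-Hfun W u) * sqrt (Dfun j₀ W u)
      ≤ exp (u i₀) * exp (-(1 / 4 * ∑ i, ∑ j, W i j * (u i - u j) ^ 2)) *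
          (exp (u i₁) ^ (N - 1) * sqrt (Dfun j₀ W fun _ => 0)) := by gcongr
    _ = exp (u i₀) * exp (u i₁) ^ (N - 1) *
          exp (-(1 / 4 * ∑ i, ∑ j, W i j * (u i - u j) ^ 2)) * sqrt (Dfun j₀ W fun _ => 0) := by
        ring
    _ ≤ _ := by gcongr

/-- Theorem (Gaussian domination of the integrand of the limiting measure): for `u ∈ ℋ₀`,
`e^{u_{i₀}} e^{-H(W,u)} √(D(W,u)) ≤ (Σᵢ (e^{Nuᵢ} + e^{-Nuᵢ}))
  exp(-(1/2) Σ_{{i,j}∈E} W_{ij}(uᵢ-uⱼ)²) √(D(W,0))`. -/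
theorem integrand_gaussian_domination (G : SimpleGraph V) (hconn : G.Connected)
    (W : V → V → ℝ) (hWsymm : ∀ i j, W i j = W j i)
    (hWpos : ∀ i j, G.Adj i j → 0 < W i j)
    (hWzero : ∀ i j, ¬ G.Adj i j → W i j = 0)
    (u : V → ℝ) (hu : ∑ i, u i = 0) (i₀ j₀ : V) :
    Real.exp (u i₀) * Real.exp (-Hfun W u) * Real.sqrt (Dfun j₀ W u) ≤
      (∑ i, (Real.exp ((Fintype.card V : ℝ) * u i) +
        Real.exp (-((Fintype.card V : ℝ) * u i)))) *
        Real.exp (-((1 / 4) * ∑ i, ∑ j, W i j * (u i - u j) ^ 2)) *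
        Real.sqrt (Dfun j₀ W (fun _ => 0)) :=
  integrand_gaussian_domination_general G W hWsymm hWpos hWzero u i₀ j₀
end
end

section
/- Determinant decomposition along self-avoiding paths: let Λ be a finite connected graph with positive edge weights β, distinguished vertices 0 and x in Λ, η>0 and t∈ℝ^Λ. Let A_Λ^{ηδ₀,β}(t) be the matrix with entries A_{ij}=−β_{ij}e^{t_i+t_j} for i≠j and A_{ii}=Σ_{l∼i} β_{il} e^{t_i+t_l} + η e^{t_i} 1_{i=0}. Let Γ_x be the set of self-avoiding paths in Λ from 0 to x, each identified with its set γ of edges and set Λ_γ of visited vertices, and Λ_γ^c = Λ∖Λ_γ. Then det A_Λ^{ηδ₀,β}(t) = η e^{t_0} Σ_{γ∈Γ_x} (∏_{{i,j}∈γ} β_{ij} e^{t_i+t_j}) · det A_{Λ_γ^c}^{ε(γ),β}(t), where A_{Λ_γ^c}^{ε(γ),β}(t) is the analogous matrix on Λ_γ^c with pinning ε(γ)_i = Σ_{k∈Λ_γ, k∼i} β_{ik} e^{t_k}, i.e. entries −β_{ij}e^{t_i+t_j} off the diagonal and Σ_{l∈Λ_γ^c, l∼i} β_{il} e^{t_i+t_l}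 + ε(γ)_i e^{t_i} on the diagonal (the determinant over the empty set being 1). -/
/-! Since `β_{ii} = 0`, `A 𝟙 = η e^{t₀} e₀`, hence `det A = η e^{t₀} adj(A)_{x0}`: the minor of `A`
with row `0` replaced by the unit row `e_x`. Expand such a minor along the column `u` of its unit
row: the cofactor of `A_{iu}` carries unit rows `e_x` at `u` and `e_u` at `i`; swapping them deletes
`u` and moves `e_x` to the neighbour `i`, and the sign cancels that of `A_{iu} = -β_{ui}e^{t_u+t_i}`.
Iterating until the unit row reaches `x` unfolds the minor into a sum over self-avoiding paths `γ`
from `0` to `x` of `∏_{ij∈γ} β_{ij}e^{t_i+t_j}` times the principal minor of `A` on `Λ_γ^c`, which is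
`det A_{Λ_γ^c}^{ε(γ),β}(t)` (`ε(γ)` collects the edges from `Λ_γ^c` into `Λ_γ`). Deleted vertices
stay in the index type, their rows replaced by rows of the identity. -/

open MeasureTheory Real Filter

noncomputable section

variable {V : Type*} [Fintype V] [DecidableEq V]

/-- The matrix `A^{ε,β}(t)`: `A_{ij} = -β_{ij} e^{tᵢ+tⱼ}` for `i ≠ j` and
`A_{ii} = Σ_l β_{il} e^{tᵢ+t_l} + εᵢ e^{tᵢ}`. -/
def Amat (β : V → V → ℝ) (ε : V → ℝ) (t : V → ℝ) : Matrix V V ℝ :=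
  Matrix.of fun i j =>
    if i = j then (∑ l, β i l * Real.exp (t i + t l)) + ε i * Real.exp (t i)
    else -(β i j * Real.exp (t i + t j))

/-- The matrix `A_{Λ_γ^c}^{ε(γ),β}(t)` on the complement of the vertex set `L` of a path:
off-diagonal entries `-β_{ij}e^{tᵢ+tⱼ}`, diagonal entries
`Σ_{l∉L} β_{il} e^{tᵢ+t_l} + ε(γ)ᵢ e^{tᵢ}` with `ε(γ)ᵢ = Σ_{k∈L} β_{ik} e^{t_k}`. -/
def Acomp (β : V → V → ℝ) (t : V → ℝ) (L : List V) :
    Matrix {i : V // i ∉ L} {i : V // i ∉ L} ℝ :=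
  Matrix.of fun i j =>
    if i = j then
      (∑ l : {i : V // i ∉ L}, β (i : V) (l : V) * Real.exp (t (i : V) + t (l : V))) +
        (∑ k : V, if k ∈ L then β (i : V) k * Real.exp (t k) else 0) * Real.exp (t (i : V))
    else -(β (i : V) (j : V) * Real.exp (t (i : V) + t (j : V)))

namespace SimpleGraph

variable {n : Type*} [Fintype n] [DecidableEq n] {G : SimpleGraph n} [DecidableRel G.Adj]

theorem sum_path_eq_sum_cons {A : Type*} [AddCommMonoid A] {u x : n} (hux : u ≠ x)
    (f : G.Walk u x → A) :
    ∑ p : G.Path u x, f p = ∑ i, ∑ q : G.Path i x,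
      if h : G.Adj u i ∧ u ∉ (q : G.Walk i x).support then f (.cons h.1 q) else 0 := by
  rw [Finset.sum_sigma']
  have hcons : ∀ z : (i : n) × G.Path i x,
      (if h : G.Adj u z.1 ∧ u ∉ (z.2 : G.Walk z.1 x).support then f (.cons h.1 z.2) else 0) ≠ 0 →
        G.Adj u z.1 ∧ u ∉ (z.2 : G.Walk z.1 x).support :=
    fun _ hz => Classical.byContradiction fun h => hz (dif_neg h)
  symm
  refine Finset.sum_bij_ne_zero
    (fun z _ hz => ⟨.cons (hcons z hz).1 z.2, z.2.2.cons (hcons z hz).2⟩)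
    (fun _ _ _ => Finset.mem_univ _) ?_ ?_ ?_
  · rintro ⟨i, q⟩ _ _ ⟨i', q'⟩ _ _ h
    obtain ⟨rfl, hq⟩ := Walk.cons.inj (congrArg Subtype.val h)
    cases Subtype.ext (eq_of_heq hq)
    rfl
  · rintro ⟨_ | ⟨hadj, q⟩, hp⟩ - hf
    · exact absurd rfl hux
    · obtain ⟨hq, hu⟩ := (Walk.cons_isPath_iff hadj q).mp hp
      exact ⟨⟨_, q, hq⟩, Finset.mem_univ _, by simpa [hadj, hu] using hf, rfl⟩
  · rintro z - hz
    exact dif_pos (hcons z hz)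

end SimpleGraph

namespace Matrix

section identityRowsOn

variable {n α : Type*} [DecidableEq n] [Zero α] [One α]

def identityRowsOn (M : Matrix n n α) (S : Finset n) : Matrix n n α :=
  of fun i j => if i ∈ S then (1 : Matrix n n α) i j else M i j

@[simp]
theorem identityRowsOn_empty (M : Matrix n n α) : M.identityRowsOn ∅ = M := by
  ext i j
  simp [identityRowsOn]

theorem identityRowsOn_insert (M : Matrix n n α) (S : Finset n) (i : n) :
    M.identityRowsOn (insert i S) = (M.identityRowsOn S).updateRow i (Pi.single i 1) := by
  ext k j
  rcases eq_or_ne k i with rfl | hki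
  · simp [identityRowsOn, one_eq_pi_single]
  · simp [identityRowsOn, hki]

theorem updateRow_identityRowsOn_apply_self_col (M : Matrix n n α) {S : Finset n} {u x : n}
    (hu : u ∉ S) (hux : u ≠ x) (i : n) :
    (M.identityRowsOn S).updateRow u (Pi.single x 1) i u = if i ∈ insert u S then 0 else M i u := by
  rcases eq_or_ne i u with rfl | hiu
  · simp [hux.symm]
  · by_cases hiS : i ∈ S <;> simp [updateRow_apply, identityRowsOn, hiu, hiS]

end identityRowsOn

variable {n K : Type*} [Fintype n] [DecidableEq n] [CommRing K]

theorem det_identityRowsOn (M : Matrix n n K) (S : Finset n) :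
    (M.identityRowsOn S).det = (M.toSquareBlockProp (· ∉ S)).det := by
  have hS : toSquareBlockProp (M.identityRowsOn S) (fun i => ¬i ∉ S) = 1 := by
    ext i j
    simp [identityRowsOn, toSquareBlockProp, toBlock, not_not.mp i.2, one_apply, Subtype.ext_iff]
  have hSc : toSquareBlockProp (M.identityRowsOn S) (· ∉ S) = toSquareBlockProp M (· ∉ S) := by
    ext i j
    simp [identityRowsOn, toSquareBlockProp, toBlock, i.2]
  rw [twoBlockTriangular_det _ (· ∉ S), hS, hSc, det_one, mul_one]
  intro i hi j hj
  simp only [not_not] at hi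
  simp only [identityRowsOn, of_apply, if_pos hi]
  exact one_apply_ne (fun h => hj (h ▸ hi))

theorem det_eq_mul_adjugate_of_mulVec_one {M : Matrix n n K} {v : n} {c : K}
    (hM : M *ᵥ (fun _ => 1) = Pi.single v c) (x : n) : M.det = c * M.adjugate x v := by
  have h := congrFun (congrArg (M.adjugate *ᵥ ·) hM) x
  simp only [mulVec_mulVec, adjugate_mul, smul_mulVec, one_mulVec, mulVec_single] at h
  simpa [mul_comm] using h

theorem det_updateRow_updateRow_comm (M : Matrix n n K) {i j : n} (hij : i ≠ j) (a b : n → K) :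
    ((M.updateRow i a).updateRow j b).det = -((M.updateRow i b).updateRow j a).det := by
  have h : ((M.updateRow i a).updateRow j b).submatrix (Equiv.swap i j) id =
      (M.updateRow i b).updateRow j a := by
    ext k l
    rcases eq_or_ne k i with rfl | hki
    · simp [updateRow_apply, hij]
    rcases eq_or_ne k j with rfl | hkj
    · simp [updateRow_apply, hij]
    · simp [updateRow_apply, Equiv.swap_apply_of_ne_of_ne hki hkj, hki, hkj]
  rw [← h, det_permute, Equiv.Perm.sign_swap hij]
  simp

open SimpleGraph

variable {G : SimpleGraph n} (M : Matrix n n K)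

def pathTerm (R : Finset n) {u x : n} (p : G.Walk u x) : K :=
  if ∀ v ∈ p.support, v ∉ R then
    (p.darts.map fun d => -M d.snd d.fst).prod * (M.identityRowsOn (R ∪ p.support.toFinset)).det
  else 0

theorem pathTerm_eq_zero_of_mem {R : Finset n} {u x v : n} {p : G.Walk u x}
    (hv : v ∈ p.support) (hvR : v ∈ R) : M.pathTerm R p = 0 :=
  if_neg fun h => h v hv hvR

theorem pathTerm_nil {R : Finset n} {u : n} (hu : u ∉ R) :
    M.pathTerm R (.nil : G.Walk u u) = (M.identityRowsOn (insert u R)).det := by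
  simp [pathTerm, hu]

theorem pathTerm_cons {R : Finset n} {u i x : n} (hu : u ∉ R) (h : G.Adj u i) (q : G.Walk i x)
    (hq : u ∉ q.support) : M.pathTerm R (.cons h q) = -M i u * M.pathTerm (insert u R) q := by
  have hcond : (∀ v ∈ q.support, v ∉ insert u R) ↔ ∀ v ∈ q.support, v ∉ R := by
    simp only [Finset.mem_insert, not_or]
    exact ⟨fun h v hv => (h v hv).2, fun h v hv => ⟨fun hvu => hq (hvu ▸ hv), h v hv⟩⟩
  simp only [pathTerm, Walk.support_cons, List.forall_mem_cons, hcond, Walk.darts_cons,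
    List.map_cons, List.prod_cons, List.toFinset_cons, Finset.union_insert, Finset.insert_union]
  split_ifs with h' <;> simp_all [mul_assoc]

theorem dite_pathTerm_cons [DecidableRel G.Adj] (hM : ∀ i j, i ≠ j → ¬G.Adj i j → M i j = 0) {R : Finset n}
    {u i x : n} (hu : u ∉ R) (q : G.Walk i x) :
    (if h : G.Adj u i ∧ u ∉ q.support then M.pathTerm R (.cons h.1 q) else 0) =
      if i ∈ insert u R then 0 else -M i u * M.pathTerm (insert u R) q := by
  by_cases hi : i ∈ insert u R
  · rw [if_pos hi]
    split_ifs with h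
    · rw [pathTerm_cons M hu h.1 q h.2, pathTerm_eq_zero_of_mem M q.start_mem_support hi,
        mul_zero]
    · rfl
  rw [if_neg hi]
  split_ifs with h
  · exact pathTerm_cons M hu h.1 q h.2
  by_cases hadj : G.Adj u i
  · rw [pathTerm_eq_zero_of_mem M (not_not.mp (not_and.mp h hadj)) (Finset.mem_insert_self u R),
      mul_zero]
  · have hiu : i ≠ u := fun h => hi (h ▸ Finset.mem_insert_self u R)
    rw [hM i u hiu fun h => hadj h.symm, neg_zero, zero_mul]

theorem det_updateRow_identityRowsOn_eq_sum_pathTerm [DecidableRel G.Adj]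
    (hM : ∀ i j, i ≠ j → ¬G.Adj i j → M i j = 0) (R : Finset n) {u x : n}
    (hu : u ∉ R) (hx : x ∉ R) :
    ((M.identityRowsOn R).updateRow u (Pi.single x 1)).det =
      ∑ p : G.Path u x, M.pathTerm R (p : G.Walk u x) := by
  rcases eq_or_ne u x with rfl | hux
  · rw [← identityRowsOn_insert, Fintype.sum_eq_single Path.nil fun p hp => absurd p.loop_eq hp,
      Path.nil_coe, pathTerm_nil M hu]
  rw [det_eq_sum_mul_adjugate_col _ u, sum_path_eq_sum_cons hux (M.pathTerm R)]
  refine Finset.sum_congr rfl fun i _ => ?_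
  rw [Finset.sum_congr rfl fun (q : G.Path i x) _ => dite_pathTerm_cons M hM hu q.1,
    updateRow_identityRowsOn_apply_self_col M hu hux]
  split_ifs with hi
  · simp
  have hui : u ≠ i := fun h => hi (h ▸ Finset.mem_insert_self u R)
  rw [adjugate_apply, det_updateRow_updateRow_comm _ hui, ← identityRowsOn_insert,
    det_updateRow_identityRowsOn_eq_sum_pathTerm hM (insert u R) hi (by simp [hux.symm, hx]),
    mul_neg, Finset.mul_sum, ← Finset.sum_neg_distrib]
  simp only [neg_mul]
termination_by Rᶜ.card
decreasing_by exact Finset.card_lt_card (Finset.compl_ssubset_compl.mpr (Finset.ssubset_insert hu))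

end Matrix

section Amat

open Matrix

variable {β : V → V → ℝ} {t : V → ℝ}

theorem Amat_mulVec_one (hβ : ∀ i, β i i = 0) (ε : V → ℝ) :
    Amat β ε t *ᵥ (fun _ => 1) = fun i => ε i * Real.exp (t i) := by
  ext i
  have hrow : ∀ j, Amat β ε t i j =
      (if i = j then (∑ l, β i l * Real.exp (t i + t l)) + ε i * Real.exp (t i) else 0) -
        β i j * Real.exp (t i + t j) := by
    intro j
    rcases eq_or_ne i j with rfl | hij
    · simp [Amat, hβ]
    · simp [Amat, hij]
  simp [mulVec, dotProduct, hrow, Finset.sum_sub_distrib]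

theorem Amat_updateRow {ε : V → ℝ} {v : V} (hε : ∀ i, i ≠ v → ε i = 0) (r : V → ℝ) :
    (Amat β ε t).updateRow v r = (Amat β 0 t).updateRow v r := by
  ext i j
  rcases eq_or_ne i v with rfl | hiv
  · simp
  · simp [updateRow_ne hiv, Amat, hε i hiv]

theorem Acomp_eq_toSquareBlockProp (L : List V) :
    Acomp β t L = (Amat β 0 t).toSquareBlockProp (· ∉ L) := by
  ext i j
  rcases eq_or_ne i j with rfl | hij
  · simp only [Acomp, Amat, toSquareBlockProp, toBlock, of_apply, submatrix_apply, if_true,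
      Pi.zero_apply, zero_mul, add_zero]
    rw [← Fintype.sum_subtype_add_sum_subtype (· ∉ L) (fun l => β i l * Real.exp (t i + t l)),
      Finset.sum_mul, ← Fintype.sum_subtype_add_sum_subtype (· ∉ L)]
    have hout : ∀ k : {k // k ∉ L},
        (if (k : V) ∈ L then β i k * Real.exp (t k) else 0) * Real.exp (t i) = 0 :=
      fun k => by rw [if_neg k.2, zero_mul]
    have hin : ∀ k : {k // ¬k ∉ L},
        (if (k : V) ∈ L then β i k * Real.exp (t k) else 0) * Real.exp (t i) =
          β i k * Real.exp (t i + t k) :=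
      fun k => by rw [if_pos (not_not.mp k.2), Real.exp_add]; ring
    simp only [hout, hin, Finset.sum_const_zero, zero_add]
  · have hij' : (i : V) ≠ j := Subtype.coe_ne_coe.mpr hij
    simp [Acomp, Amat, toSquareBlockProp, toBlock, hij, hij']

theorem neg_Amat_apply_of_ne (hβ : ∀ i j, β i j = β j i) (ε : V → ℝ) {i j : V} (hij : i ≠ j) :
    -Amat β ε t j i = β i j * Real.exp (t i + t j) := by
  simp [Amat, hij.symm, hβ j i, add_comm]

end Amat

theorem det_decomposition_along_paths_general
    (G : SimpleGraph V) [DecidableRel G.Adj]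
    (β : V → V → ℝ) (hβsymm : ∀ i j, β i j = β j i)
    (hβzero : ∀ i j, ¬ G.Adj i j → β i j = 0)
    (v0 x : V) (η : ℝ) (t : V → ℝ) :
    (Amat β (fun i => if i = v0 then η else 0) t).det =
      η * Real.exp (t v0) *
        ∑ p : G.Path v0 x,
          (((p : G.Walk v0 x).darts.map
            (fun d => β d.toProd.1 d.toProd.2 *
              Real.exp (t d.toProd.1 + t d.toProd.2))).prod *
            (Acomp β t (p : G.Walk v0 x).support).det) := by
  have hβdiag : ∀ i, β i i = 0 := fun i => hβzero i i G.irrefl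
  have hrows : (Amat β (fun i => if i = v0 then η else 0) t).mulVec (fun _ => 1) =
      Pi.single v0 (η * Real.exp (t v0)) := by
    rw [Amat_mulVec_one hβdiag]
    ext i
    by_cases hi : i = v0 <;> simp [hi]
  have hsupp : ∀ i j, i ≠ j → ¬G.Adj i j → Amat β 0 t i j = 0 := fun i j hij hadj => by
    simp [Amat, hij, hβzero i j hadj]
  rw [Matrix.det_eq_mul_adjugate_of_mulVec_one hrows x, Matrix.adjugate_apply,
    Amat_updateRow fun i hi => if_neg hi, ← Matrix.identityRowsOn_empty (Amat β 0 t),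
    Matrix.det_updateRow_identityRowsOn_eq_sum_pathTerm _ hsupp ∅ (Finset.notMem_empty _)
      (Finset.notMem_empty _)]
  congr 1
  refine Finset.sum_congr rfl fun p _ => ?_
  rw [Matrix.pathTerm, if_pos fun v _ => Finset.notMem_empty v, Finset.empty_union,
    Matrix.det_identityRowsOn, Matrix.equiv_block_det _ fun _ => List.mem_toFinset.not.symm,
    ← Acomp_eq_toSquareBlockProp]
  congr 2
  exact List.map_congr_left fun d _ => neg_Amat_apply_of_ne hβsymm 0 d.fst_ne_snd

/-- Theorem (determinant decomposition along self-avoiding paths):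
`det A_Λ^{ηδ₀,β}(t) = η e^{t₀} Σ_{γ∈Γ_x} (∏_{{i,j}∈γ} β_{ij} e^{tᵢ+tⱼ})
  det A_{Λ_γ^c}^{ε(γ),β}(t)`. -/
theorem det_decomposition_along_paths
    (G : SimpleGraph V) [DecidableRel G.Adj] (hconn : G.Connected)
    (β : V → V → ℝ) (hβsymm : ∀ i j, β i j = β j i)
    (hβpos : ∀ i j, G.Adj i j → 0 < β i j)
    (hβzero : ∀ i j, ¬ G.Adj i j → β i j = 0)
    (v0 x : V) (η : ℝ) (hη : 0 < η) (t : V → ℝ) :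
    (Amat β (fun i => if i = v0 then η else 0) t).det =
      η * Real.exp (t v0) *
        ∑ p : G.Path v0 x,
          (((p : G.Walk v0 x).darts.map
            (fun d => β d.toProd.1 d.toProd.2 *
              Real.exp (t d.toProd.1 + t d.toProd.2))).prod *
            (Acomp β t (p : G.Walk v0 x).support).det) :=
  det_decomposition_along_paths_general G β hβsymm hβzero v0 x η t
end
end

section
/- Monotonicity of the pinned determinant: let V be a finite set with edge set E_V and t∈ℝ^V. For nonnegative symmetric weights β=(β_e)_{e∈E_V} and nonnegative pinning ε∈[0,∞)^V, let A^{ε,β}(t) be the matrix with A_{ij}=−β_{ij}e^{t_i+t_j} for i≠j and A_{ii}=Σ_l β_{il} e^{t_i+t_l} + ε_i e^{t_i}. If β ≤ β' and ε ≤ ε' entrywise, then 0 ≤ det A^{ε,β}(t) ≤ det A^{ε',β'}(t). In particular, replacing each β_e for e in a subset S⊂E_V by min(β_e,1) decreases the determinant by a factor at most ∏_{e∈S} max(β_e,1): det A^{ε,β}(t) ≤ (∏_{e∈S} max(β_e,1)) det A^{ε̃,β̃}(t), where β̃_e=min(β_e,1) for e∈S, β̃_e=β_e otherwise, and ε̃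 is built from β̃ in the same way ε was built from β whenever ε has that form. -/
/-!
`A^{ε,β}(t)` is the Laplacian of the graph with weights `β_{ij} e^{tᵢ+tⱼ}` plus a nonnegative
diagonal, hence positive semidefinite, and it is additive in `(β, ε)`. Monotonicity follows from
`det A ≤ det (A + C)` for positive semidefinite `A, C`: with `S = √A` invertible,
`A + C = S (1 + S⁻¹ C S⁻¹) S` and `det (1 + S⁻¹ C S⁻¹) ≥ 1`.

For the truncation bound, `ε ≤ M ε̃` entrywise with `Mᵢ = ∏_k max(θ_{ik}, 1)`. The determinant is
affine in each pinning `εᵢ`, and nonnegative at `εᵢ = 0` (the matrix stays positive semidefinite),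
so multiplying one `εᵢ` by `m ≥ 1` multiplies the determinant by at most `m`.
-/

open MeasureTheory Real Filter

noncomputable section

variable {V : Type*} [Fintype V] [DecidableEq V]

open Matrix

variable {n : Type*} [Fintype n] [DecidableEq n]

omit [DecidableEq n] in
lemma sum_sum_mul_mul_sub_nonneg {w : n → n → ℝ} (hw : ∀ i j, w i j = w j i)
    (hw0 : ∀ i j, 0 ≤ w i j) (x : n → ℝ) : 0 ≤ ∑ i, ∑ j, w i j * x i * (x i - x j) := by
  have hswap : ∑ i, ∑ j, w i j * x i * (x i - x j) = ∑ i, ∑ j, w i j * x j * (x j - x i) := by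
    rw [Finset.sum_comm]; simp_rw [hw]
  have htwice : 2 * ∑ i, ∑ j, w i j * x i * (x i - x j) = ∑ i, ∑ j, w i j * (x i - x j) ^ 2 := by
    rw [two_mul]; nth_rw 2 [hswap]
    simp_rw [← Finset.sum_add_distrib]
    congr! 2; ring
  have : 0 ≤ ∑ i, ∑ j, w i j * (x i - x j) ^ 2 :=
    Finset.sum_nonneg fun i _ => Finset.sum_nonneg fun j _ => mul_nonneg (hw0 i j) (sq_nonneg _)
  linarith

lemma le_mul_min_one_of_max_one_le {x M : ℝ} (hx : 0 ≤ x) (hM : max x 1 ≤ M) :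
    x ≤ M * min x 1 :=
  calc x = max x 1 * min x 1 := by rw [mul_comm, min_mul_max, mul_one]
    _ ≤ M * min x 1 := mul_le_mul_of_nonneg_right hM (le_min hx zero_le_one)

namespace Matrix

def weightedLaplacian (w : n → n → ℝ) : Matrix n n ℝ :=
  diagonal (fun i => ∑ j, w i j) - of w

lemma dotProduct_weightedLaplacian_mulVec (w : n → n → ℝ) (x : n → ℝ) :
    x ⬝ᵥ (weightedLaplacian w *ᵥ x) = ∑ i, ∑ j, w i j * x i * (x i - x j) := by
  rw [weightedLaplacian, sub_mulVec, dotProduct_sub]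
  simp only [dotProduct, mulVec_diagonal]
  simp only [mulVec, dotProduct, of_apply, Finset.sum_mul, Finset.mul_sum, ← Finset.sum_sub_distrib]
  congr! 2; ring

lemma weightedLaplacian_posSemidef {w : n → n → ℝ} (hw : ∀ i j, w i j = w j i)
    (hw0 : ∀ i j, 0 ≤ w i j) : (weightedLaplacian w).PosSemidef := by
  refine .of_dotProduct_mulVec_nonneg ((isHermitian_diagonal _).sub (by ext i j; simp [hw j i]))
    fun x => ?_
  rw [star_trivial, dotProduct_weightedLaplacian_mulVec]
  exact sum_sum_mul_mul_sub_nonneg hw hw0 x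

lemma det_add_diagonal_single {R : Type*} [CommRing R] (A : Matrix n n R) (i : n) (s : R) :
    (A + diagonal (Pi.single i s)).det = A.det + s * (A.updateRow i (Pi.single i 1)).det := by
  have h : A + diagonal (Pi.single i s) = A.updateRow i (A i + s • Pi.single i 1) := by
    ext k l
    by_cases hk : k = i
    · subst hk; by_cases hl : k = l <;> simp [hl, eq_comm]
    · simp [diagonal_apply, hk]
  rw [h, det_updateRow_add, updateRow_eq_self, det_updateRow_smul]

namespace PosSemidef

lemma one_le_det_one_add {D : Matrix n n ℝ} (hD : D.PosSemidef) : 1 ≤ (1 + D).det := by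
  have h : 1 + D = Unitary.conjStarAlgAut ℝ _ hD.1.eigenvectorUnitary
      (diagonal fun i => 1 + hD.1.eigenvalues i) := by
    conv_lhs => rw [hD.1.spectral_theorem, ← map_one (Unitary.conjStarAlgAut ℝ _ _), ← map_add]
    rw [← diagonal_one, diagonal_add]; rfl
  rw [h, det_map, det_diagonal]
  exact Finset.one_le_prod fun i _ => by linarith [hD.eigenvalues_nonneg i]

open scoped MatrixOrder in
lemma det_le_det_add {A C : Matrix n n ℝ} (hA : A.PosSemidef) (hC : C.PosSemidef) :
    A.det ≤ (A + C).det := by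
  obtain hdet | hdet := eq_or_ne A.det 0
  · rw [hdet]; exact (hA.add hC).det_nonneg
  set S := CFC.sqrt A
  have hSS : S * S = A := CFC.sqrt_mul_sqrt_self A hA.nonneg
  have hS : S.PosSemidef := (CFC.sqrt_nonneg A).posSemidef
  have hSunit : IsUnit S.det :=
    isUnit_iff_ne_zero.2 fun h => hdet (by rw [← hSS, det_mul, h, zero_mul])
  have hD : (S⁻¹ * C * S⁻¹).PosSemidef := by
    have := hC.conjTranspose_mul_mul_same S⁻¹
    rwa [conjTranspose_nonsing_inv, hS.1.eq] at this
  have hfactor : A + C = S * (1 + S⁻¹ * C * S⁻¹) * S := by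
    simp [mul_add, add_mul, Matrix.mul_assoc, hSS, mul_nonsing_inv_cancel_left _ _ hSunit,
      nonsing_inv_mul _ hSunit]
  have hdet_factor : (A + C).det = A.det * (1 + S⁻¹ * C * S⁻¹).det := by
    rw [hfactor, ← hSS, det_mul, det_mul, det_mul]; ring
  rw [hdet_factor]
  exact le_mul_of_one_le_right hA.det_nonneg hD.one_le_det_one_add

lemma det_add_diagonal_update_mul_le {A : Matrix n n ℝ} (hA : A.PosSemidef) {d : n → ℝ}
    (hd : ∀ j, 0 ≤ d j) (i : n) {m : ℝ} (hm : 1 ≤ m) :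
    (A + diagonal (Function.update d i (m * d i))).det ≤ m * (A + diagonal d).det := by
  set B := A + diagonal (Function.update d i 0)
  have hB : B.PosSemidef := hA.add (.diagonal fun j => by
    by_cases h : j = i <;> simp [h, hd j])
  have hsplit : ∀ s, A + diagonal (Function.update d i s) = B + diagonal (Pi.single i s) := by
    intro s
    rw [add_assoc, diagonal_add]
    congr 2
    ext j; by_cases h : j = i <;> simp [h]
  conv_rhs => rw [← Function.update_eq_self i d]
  -- both sides are affine in the `i`-th diagonal entry, with value `det B ≥ 0` at `0`
  rw [hsplit, hsplit, det_add_diagonal_single, det_add_diagonal_single]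
  nlinarith [hB.det_nonneg]

lemma det_add_diagonal_mul_le {A : Matrix n n ℝ} (hA : A.PosSemidef) {d m : n → ℝ}
    (hd : ∀ j, 0 ≤ d j) (hm : ∀ i, 1 ≤ m i) :
    (A + diagonal (m * d)).det ≤ (∏ i, m i) * (A + diagonal d).det := by
  suffices ∀ s : Finset n,
      (A + diagonal (s.piecewise (m * d) d)).det ≤ (∏ i ∈ s, m i) * (A + diagonal d).det by
    simpa using this Finset.univ
  intro s
  induction s using Finset.induction_on with
  | empty => simp
  | insert a s ha ih =>
    have hd' : ∀ j, 0 ≤ s.piecewise (m * d) d j := fun j => by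
      by_cases h : j ∈ s <;> simp [h, mul_nonneg (zero_le_one.trans (hm j)) (hd j), hd j]
    rw [Finset.piecewise_insert, Finset.prod_insert ha, mul_assoc]
    calc _ ≤ m a * (A + diagonal (s.piecewise (m * d) d)).det := by
          simpa [Finset.piecewise_eq_of_notMem _ _ _ ha] using
            hA.det_add_diagonal_update_mul_le hd' a (hm a)
      _ ≤ _ := mul_le_mul_of_nonneg_left ih (zero_le_one.trans (hm a))

end PosSemidef
end Matrix

section Amat

variable (t : V → ℝ)

lemma Amat_eq_weightedLaplacian_add_diagonal (β : V → V → ℝ) (ε : V → ℝ) :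
    Amat β ε t = weightedLaplacian (fun i j => β i j * exp (t i + t j)) +
      diagonal (fun i => β i i * exp (t i + t i) + ε i * exp (t i)) := by
  ext i j
  by_cases h : i = j
  · subst h; simp [Amat, weightedLaplacian]; ring
  · simp [Amat, weightedLaplacian, h]

lemma Amat_add (β γ : V → V → ℝ) (ε δ : V → ℝ) :
    Amat (β + γ) (ε + δ) t = Amat β ε t + Amat γ δ t := by
  ext i j
  by_cases h : i = j
  · subst h; simp [Amat, add_mul, Finset.sum_add_distrib]; ring
  · simp [Amat, h]; ring

lemma Amat_eq_add_diagonal (β : V → V → ℝ) (ε : V → ℝ) :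
    Amat β ε t = Amat β 0 t + diagonal (fun i => ε i * exp (t i)) := by
  ext i j
  by_cases h : i = j
  · subst h; simp [Amat]
  · simp [Amat, h]

variable {t}

lemma Amat_posSemidef {β : V → V → ℝ} {ε : V → ℝ} (hβ : ∀ i j, β i j = β j i)
    (hβ0 : ∀ i j, 0 ≤ β i j) (hε0 : ∀ i, 0 ≤ ε i) : (Amat β ε t).PosSemidef := by
  rw [Amat_eq_weightedLaplacian_add_diagonal]
  refine (weightedLaplacian_posSemidef (fun i j => ?_) fun i j => ?_).add
    (.diagonal fun i => ?_)
  · rw [hβ, add_comm]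
  · exact mul_nonneg (hβ0 i j) (exp_pos _).le
  · exact add_nonneg (mul_nonneg (hβ0 i i) (exp_pos _).le) (mul_nonneg (hε0 i) (exp_pos _).le)

lemma det_Amat_le_det_Amat {β γ : V → V → ℝ} {ε δ : V → ℝ} (hβ : ∀ i j, β i j = β j i)
    (hγ : ∀ i j, γ i j = γ j i) (hβ0 : ∀ i j, 0 ≤ β i j) (hε0 : ∀ i, 0 ≤ ε i)
    (hβγ : ∀ i j, β i j ≤ γ i j) (hεδ : ∀ i, ε i ≤ δ i) :
    (Amat β ε t).det ≤ (Amat γ δ t).det := by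
  have hdiff : (Amat (γ - β) (δ - ε) t).PosSemidef :=
    Amat_posSemidef (fun i j => by simp [hβ i j, hγ i j]) (fun i j => sub_nonneg.2 (hβγ i j))
      fun i => sub_nonneg.2 (hεδ i)
  have := (Amat_posSemidef (t := t) hβ hβ0 hε0).det_le_det_add hdiff
  rwa [← Amat_add, add_sub_cancel, add_sub_cancel] at this

lemma det_Amat_mul_le {β : V → V → ℝ} {m η : V → ℝ} (hβ : ∀ i j, β i j = β j i)
    (hβ0 : ∀ i j, 0 ≤ β i j) (hη0 : ∀ i, 0 ≤ η i) (hm : ∀ i, 1 ≤ m i) :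
    (Amat β (m * η) t).det ≤ (∏ i, m i) * (Amat β η t).det := by
  rw [Amat_eq_add_diagonal _ _ (m * η), Amat_eq_add_diagonal _ _ η]
  convert (Amat_posSemidef (ε := 0) hβ hβ0 fun _ => le_rfl).det_add_diagonal_mul_le
    (fun i => mul_nonneg (hη0 i) (exp_pos (t i)).le) hm using 4
  ext i
  simp only [Pi.mul_apply, mul_assoc]

end Amat

theorem pinned_det_monotone_general
    (t : V → ℝ) (β β' : V → V → ℝ) (ε ε' : V → ℝ)
    (hβsymm : ∀ i j, β i j = β j i) (hβ'symm : ∀ i j, β' i j = β' j i)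
    (hβ0 : ∀ i j, 0 ≤ β i j) (hε0 : ∀ i, 0 ≤ ε i)
    (hββ' : ∀ i j, β i j ≤ β' i j) (hεε' : ∀ i, ε i ≤ ε' i) :
    (0 ≤ (Amat β ε t).det ∧ (Amat β ε t).det ≤ (Amat β' ε' t).det) ∧
    (∀ (θ : V → V → ℝ) (c : V → ℝ), (∀ i k, 0 ≤ θ i k) → (∀ k, 0 ≤ c k) →
      (Amat β (fun i => ∑ k, θ i k * c k) t).det ≤
        (∏ i, ∏ k, max (θ i k) 1) *
          (Amat β (fun i => ∑ k, min (θ i k) 1 * c k) t).det) := by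
  refine ⟨⟨(Amat_posSemidef hβsymm hβ0 hε0).det_nonneg,
    det_Amat_le_det_Amat hβsymm hβ'symm hβ0 hε0 hββ' hεε'⟩, fun θ c hθ hc => ?_⟩
  set M : V → ℝ := fun i => ∏ k, max (θ i k) 1
  have hM : ∀ i, 1 ≤ M i := fun i => Finset.one_le_prod fun k _ => le_max_right _ _
  have hθM : ∀ i k, θ i k ≤ M i * min (θ i k) 1 := fun i k =>
    le_mul_min_one_of_max_one_le (hθ i k)
      (by simpa using Finset.le_prod_max_one (Finset.mem_univ k) fun k => max (θ i k) 1)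
  have hmin0 : ∀ i, 0 ≤ ∑ k, min (θ i k) 1 * c k := fun i =>
    Finset.sum_nonneg fun k _ => mul_nonneg (le_min (hθ i k) zero_le_one) (hc k)
  have hpin : ∀ i, ∑ k, θ i k * c k ≤ M i * ∑ k, min (θ i k) 1 * c k := fun i => by
    rw [Finset.mul_sum]
    refine Finset.sum_le_sum fun k _ => ?_
    rw [← mul_assoc]
    exact mul_le_mul_of_nonneg_right (hθM i k) (hc k)
  calc _ ≤ (Amat β (M * fun i => ∑ k, min (θ i k) 1 * c k) t).det :=
        det_Amat_le_det_Amat hβsymm hβsymm hβ0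
          (fun i => Finset.sum_nonneg fun k _ => mul_nonneg (hθ i k) (hc k))
          (fun _ _ => le_rfl) hpin
    _ ≤ _ := det_Amat_mul_le hβsymm hβ0 hmin0 hM

/-- Theorem (monotonicity of the pinned determinant): if `β ≤ β'` and `ε ≤ ε'`
entrywise then `0 ≤ det A^{ε,β}(t) ≤ det A^{ε',β'}(t)`.  In particular, if `ε` is built
from auxiliary nonnegative weights `θ` by `εᵢ = Σ_k θ_{ik} c_k` and `ε̃` is built in the
same way from the truncated weights `min(θ_{ik},1)`, then
`det A^{ε,β}(t) ≤ (∏_{i,k} max(θ_{ik},1)) det A^{ε̃,β}(t)`. -/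
theorem pinned_det_monotone
    (t : V → ℝ) (β β' : V → V → ℝ) (ε ε' : V → ℝ)
    (hβsymm : ∀ i j, β i j = β j i) (hβ'symm : ∀ i j, β' i j = β' j i)
    (hβdiag : ∀ i, β i i = 0) (hβ'diag : ∀ i, β' i i = 0)
    (hβ0 : ∀ i j, 0 ≤ β i j) (hε0 : ∀ i, 0 ≤ ε i)
    (hββ' : ∀ i j, β i j ≤ β' i j) (hεε' : ∀ i, ε i ≤ ε' i) :
    (0 ≤ (Amat β ε t).det ∧ (Amat β ε t).det ≤ (Amat β' ε' t).det) ∧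
    (∀ (θ : V → V → ℝ) (c : V → ℝ), (∀ i k, 0 ≤ θ i k) → (∀ k, 0 ≤ c k) →
      (Amat β (fun i => ∑ k, θ i k * c k) t).det ≤
        (∏ i, ∏ k, max (θ i k) 1) *
          (Amat β (fun i => ∑ k, min (θ i k) 1 * c k) t).det) :=
  pinned_det_monotone_general t β β' ε ε' hβsymm hβ'symm hβ0 hε0 hββ' hεε'
end
end

section
/- Deterministic time-change identity (Lemma 1 of the paper): let V be a finite set and Y:[0,∞)→V a right-continuous path with finitely many jumps on every compact interval. Set L_x(s) := 1 + ∫₀^s 1_{Y_u=x} du and A(s) := Σ_{x∈V} log L_x(s). Then A is a continuous, strictly increasing bijection from [0,∞) onto [0,∞); letting X_t := Y_{A^{-1}(t)} and T_i(t) := ∫₀^t 1_{X_u=i} du, one has T_x(A(s)) = log L_x(s) for all x∈V and s≥0, and A^{-1}(t) = ∫₀^t e^{T_{X_u}(u)} du = Σ_{i∈V} (e^{T_i(t)} − 1) for all t≥0. -/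
open MeasureTheory Real

noncomputable section

variable {V : Type*} [Fintype V] [DecidableEq V]

/-- `L_x(s) = 1 + ∫₀^s 1_{Y_u = x} du`. -/
def Locc (Y : ℝ → V) (x : V) (s : ℝ) : ℝ :=
  1 + ∫ u in Set.Ioc (0 : ℝ) s, (if Y u = x then (1 : ℝ) else 0)

/-- `A(s) = Σ_x log L_x(s)`. -/
def Afun (Y : ℝ → V) (s : ℝ) : ℝ :=
  ∑ x : V, Real.log (Locc Y x s)

/-- The occupation time `T_i(t) = ∫₀^t 1_{X_u = i} du` of the time-changed process
`X_t = Y_{B(t)}`. -/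
def occT (Y : ℝ → V) (B : ℝ → ℝ) (i : V) (t : ℝ) : ℝ :=
  ∫ u in Set.Ioc (0 : ℝ) t, (if Y (B u) = i then (1 : ℝ) else 0)

/-!
Both sides of each identity are continuous on `[0, ∞)` with equal right derivatives, hence
equal. The right derivative of `A` at `s` is `1 / L_{Y_s}(s)` and `X ∘ A = Y`, so `s ↦ T_x(A s)`
has right derivative `1_{Y_s = x} / L_x(s)`, which is that of `log L_x(s)`. Exponentiating,
`e^{T_i(t)} - 1 = L_i(A⁻¹ t) - 1` is the time `Y` spends at `i` before `A⁻¹ t`, and these times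
add up to `A⁻¹ t`. Finally `Σ_i e^{T_i}` has right derivative `e^{T_{X_t}(t)}`, which gives the
integral formula.
-/

open Set Filter Topology

section Path

variable {α : Type*} {Y : ℝ → α}

lemma measurableSet_setOf_eq_of_finite_jumps
    (hjumps : ∀ a b : ℝ,
      {t ∈ Icc a b | ¬ ∃ ε > 0, ∀ s ∈ Ioo (t - ε) (t + ε), Y s = Y t}.Finite) (x : α) :
    MeasurableSet {u | Y u = x} := by
  set J := {t | ¬ ∃ ε > 0, ∀ s ∈ Ioo (t - ε) (t + ε), Y s = Y t}
  have hJ : J.Countable := by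
    refine (countable_iUnion fun n : ℕ => (hjumps (-n) n).countable).mono fun t ht => ?_
    exact mem_iUnion.2 ⟨⌈|t|⌉₊, abs_le.1 (Nat.le_ceil |t|), ht⟩
  have hfrontier : {u | Y u = x} \ interior {u | Y u = x} ⊆ J := by
    rintro u ⟨hu, hint⟩ ⟨ε, hε, hconst⟩
    refine hint (mem_interior.2 ⟨Ioo (u - ε) (u + ε), fun s hs => (hconst s hs).trans hu,
      isOpen_Ioo, by constructor <;> linarith⟩)
  rw [← union_sdiff_cancel (interior_subset (s := {u | Y u = x}))]
  exact isOpen_interior.measurableSet.union (hJ.mono hfrontier).measurableSet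

lemma eventually_nhdsGE_comp_eq (hrc : ∀ t, ∀ᶠ u in 𝓝[≥] t, Y u = Y t) {φ : ℝ → ℝ}
    (hφ : Monotone φ) (hφc : ∀ t, ContinuousWithinAt φ (Ici t) t) (t : ℝ) :
    ∀ᶠ u in 𝓝[≥] t, Y (φ u) = Y (φ t) :=
  ((hφc t).tendsto_nhdsWithin fun _ hu => hφ hu).eventually (hrc (φ t))

end Path

section Occupation

variable {α : Type*} [DecidableEq α]

-- `Locc Y x = 1 + occupation Y x` and `occT Y B = occupation (Y ∘ B)` hold definitionally.
def occupation (Y : ℝ → α) (x : α) (s : ℝ) : ℝ :=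
  ∫ u in Ioc 0 s, if Y u = x then 1 else 0

variable {Y : ℝ → α}

lemma occupation_nonneg (x : α) (s : ℝ) : 0 ≤ occupation Y x s :=
  setIntegral_nonneg measurableSet_Ioc fun u _ => by positivity

lemma occupation_congr {Y' : ℝ → α} (h : ∀ u > 0, Y u = Y' u) (x : α) :
    occupation Y x = occupation Y' x :=
  funext fun _ => setIntegral_congr_fun measurableSet_Ioc fun u hu => by simp only [h u hu.1]

lemma occupation_eq_intervalIntegral_max (x : α) (s : ℝ) :
    occupation Y x s = ∫ u in 0..max s 0, if Y u = x then 1 else 0 := by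
  rcases le_total s 0 with hs | hs
  · simp [occupation, max_eq_right hs, Ioc_eq_empty_of_le hs]
  · rw [max_eq_left hs, intervalIntegral.integral_of_le hs, occupation]

lemma measurable_indicator_eq (hY : ∀ x, MeasurableSet {u | Y u = x}) (x : α) :
    Measurable fun u => if Y u = x then (1 : ℝ) else 0 :=
  Measurable.ite (hY x) measurable_const measurable_const

lemma intervalIntegrable_indicator_eq (hY : ∀ x, MeasurableSet {u | Y u = x}) (x : α)
    (a b : ℝ) : IntervalIntegrable (fun u => if Y u = x then (1 : ℝ) else 0) volume a b := by
  refine (intervalIntegrable_const (c := (1 : ℝ))).mono_fun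
    (measurable_indicator_eq hY x).aestronglyMeasurable (ae_of_all _ fun u => ?_)
  by_cases h : Y u = x <;> simp [h]

lemma continuous_occupation (hY : ∀ x, MeasurableSet {u | Y u = x}) (x : α) :
    Continuous (occupation Y x) := by
  simp_rw [funext (occupation_eq_intervalIntegral_max (Y := Y) x)]
  exact (intervalIntegral.continuous_primitive (intervalIntegrable_indicator_eq hY x) 0).comp
    (continuous_id.max continuous_const)

lemma monotone_occupation (hY : ∀ x, MeasurableSet {u | Y u = x}) (x : α) :
    Monotone (occupation Y x) := by
  intro s s' hss'
  refine setIntegral_mono_set ?_ (ae_of_all _ fun u => by positivity)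
    (Ioc_subset_Ioc_right hss').eventuallyLE
  rcases le_total s' 0 with hs' | hs'
  · simp [Ioc_eq_empty_of_le hs']
  · exact (intervalIntegrable_iff_integrableOn_Ioc_of_le hs').1
      (intervalIntegrable_indicator_eq hY x 0 s')

lemma sum_occupation [Fintype α] (hY : ∀ x, MeasurableSet {u | Y u = x}) {s : ℝ}
    (hs : 0 ≤ s) : ∑ x, occupation Y x s = s := by
  simp_rw [occupation_eq_intervalIntegral_max (Y := Y) _ s, max_eq_left hs]
  rw [← intervalIntegral.integral_finsetSum fun x _ => intervalIntegrable_indicator_eq hY x 0 s]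
  simp

lemma hasDerivWithinAt_occupation (hY : ∀ x, MeasurableSet {u | Y u = x}) {t : ℝ}
    (hrc : ∀ᶠ u in 𝓝[≥] t, Y u = Y t) (ht : 0 ≤ t) (x : α) :
    HasDerivWithinAt (occupation Y x) (if Y t = x then 1 else 0) (Ici t) t := by
  have hcont : ContinuousWithinAt (fun u => if Y u = x then (1 : ℝ) else 0) (Ioi t) t :=
    continuousWithinAt_const.congr_of_eventuallyEq
      ((hrc.filter_mono (nhdsWithin_mono t Ioi_subset_Ici_self)).mono fun u hu => by
        simp only [hu]) rfl
  refine (intervalIntegral.integral_hasDerivWithinAt_right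
    (intervalIntegrable_indicator_eq hY x 0 t)
    (measurable_indicator_eq hY x).stronglyMeasurable.stronglyMeasurableAtFilter hcont).congr
    (fun u hu => ?_) ?_
  · rw [occupation_eq_intervalIntegral_max, max_eq_left (ht.trans hu)]
  · rw [occupation_eq_intervalIntegral_max, max_eq_left ht]

lemma one_le_Locc (x : α) (s : ℝ) : 1 ≤ Locc Y x s :=
  le_add_of_nonneg_right (occupation_nonneg x s)

lemma Locc_pos (x : α) (s : ℝ) : 0 < Locc Y x s := zero_lt_one.trans_le (one_le_Locc x s)

lemma Locc_sub_one (x : α) (s : ℝ) : Locc Y x s - 1 = occupation Y x s :=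
  add_sub_cancel_left 1 _

lemma continuous_log_Locc (hY : ∀ x, MeasurableSet {u | Y u = x}) (x : α) :
    Continuous fun s => log (Locc Y x s) :=
  (continuous_const.add (continuous_occupation hY x)).log fun s => (Locc_pos x s).ne'

lemma hasDerivWithinAt_log_Locc (hY : ∀ x, MeasurableSet {u | Y u = x}) {s : ℝ}
    (hrc : ∀ᶠ u in 𝓝[≥] s, Y u = Y s) (hs : 0 ≤ s) (x : α) :
    HasDerivWithinAt (fun σ => log (Locc Y x σ)) ((if Y s = x then 1 else 0) / Locc Y x s)
      (Ici s) s :=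
  ((hasDerivWithinAt_occupation hY hrc hs x).const_add 1).log (Locc_pos x s).ne'

lemma sum_exp_occupation_sub_one [Fintype α] (hY : ∀ x, MeasurableSet {u | Y u = x})
    (hrc : ∀ t, ∀ᶠ u in 𝓝[≥] t, Y u = Y t) {t : ℝ} (ht : 0 ≤ t) :
    ∑ i, (exp (occupation Y i t) - 1) = ∫ u in Ioc 0 t, exp (occupation Y (Y u) u) := by
  have hcont : ∀ i, Continuous fun u => exp (occupation Y i u) :=
    fun i => (continuous_occupation hY i).rexp
  have hint : ∀ i, IntervalIntegrable
      (fun u => exp (occupation Y i u) * if Y u = i then 1 else 0) volume 0 t :=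
    fun i => (intervalIntegrable_indicator_eq hY i 0 t).continuousOn_mul (hcont i).continuousOn
  have hterm : ∀ i, exp (occupation Y i t) - 1 =
      ∫ u in 0..t, exp (occupation Y i u) * if Y u = i then 1 else 0 := by
    intro i
    rw [intervalIntegral.integral_eq_sub_of_hasDeriv_right_of_le ht (hcont i).continuousOn
      (fun u hu => ((hasDerivWithinAt_occupation hY (hrc u) hu.1.le i).exp).mono
        Ioi_subset_Ici_self) (hint i)]
    simp [occupation]
  rw [Finset.sum_congr rfl fun i _ => hterm i,
    ← intervalIntegral.integral_finsetSum fun i _ => hint i, intervalIntegral.integral_of_le ht]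
  simp [mul_ite]

end Occupation

section Clock

variable {Y : ℝ → V}

lemma Afun_zero : Afun Y 0 = 0 := by simp [Afun, Locc]

lemma Afun_nonneg (s : ℝ) : 0 ≤ Afun Y s :=
  Finset.sum_nonneg fun x _ => log_nonneg (one_le_Locc x s)

lemma continuous_Afun (hY : ∀ x, MeasurableSet {u | Y u = x}) : Continuous (Afun Y) :=
  continuous_finsetSum _ fun x _ => continuous_log_Locc hY x

lemma strictMonoOn_Afun (hY : ∀ x, MeasurableSet {u | Y u = x}) :
    StrictMonoOn (Afun Y) (Ici 0) := by
  intro s hs s' hs' hss'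
  have hsum : ∑ x, occupation Y x s < ∑ x, occupation Y x s' := by
    rwa [sum_occupation hY hs, sum_occupation hY hs']
  obtain ⟨x, -, hx⟩ := Finset.exists_lt_of_sum_lt hsum
  refine Finset.sum_lt_sum (fun y _ => log_le_log (Locc_pos y s) ?_) ⟨x, Finset.mem_univ x, ?_⟩
  · exact add_le_add_right (monotone_occupation hY y hss'.le) 1
  · exact log_lt_log (Locc_pos x s) (add_lt_add_right hx 1)

lemma log_one_add_div_card_le_Afun [Nonempty V] (hY : ∀ x, MeasurableSet {u | Y u = x})
    {s : ℝ} (hs : 0 ≤ s) : log (1 + s / Fintype.card V) ≤ Afun Y s := by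
  have hsum : ∑ _x : V, s / Fintype.card V ≤ ∑ x, occupation Y x s := by
    rw [sum_occupation hY hs, Finset.sum_const, Finset.card_univ, nsmul_eq_mul,
      mul_div_cancel₀ _ (Nat.cast_ne_zero.2 Fintype.card_ne_zero)]
  obtain ⟨x, -, hx⟩ := Finset.exists_le_of_sum_le Finset.univ_nonempty hsum
  calc log (1 + s / Fintype.card V) ≤ log (Locc Y x s) :=
        log_le_log (by positivity) (add_le_add_right hx 1)
    _ ≤ Afun Y s := Finset.single_le_sum (f := fun x => log (Locc Y x s))
        (fun y _ => log_nonneg (one_le_Locc y s)) (Finset.mem_univ x)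

lemma image_Afun_Ici [Nonempty V] (hY : ∀ x, MeasurableSet {u | Y u = x}) :
    Afun Y '' Ici 0 = Ici 0 := by
  refine (image_subset_iff.2 fun s _ => Afun_nonneg s).antisymm fun y (hy : 0 ≤ y) => ?_
  have hn : (Fintype.card V : ℝ) ≠ 0 := Nat.cast_ne_zero.2 Fintype.card_ne_zero
  have hs₀ : 0 ≤ Fintype.card V * (exp y - 1) := by
    have := one_le_exp hy
    positivity
  have hy_le : y ≤ Afun Y (Fintype.card V * (exp y - 1)) := by
    simpa [mul_div_cancel_left₀ _ hn] using log_one_add_div_card_le_Afun hY hs₀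
  obtain ⟨s, hs, rfl⟩ := intermediate_value_Icc hs₀ (continuous_Afun hY).continuousOn
    ⟨by rwa [Afun_zero], hy_le⟩
  exact ⟨s, hs.1, rfl⟩

lemma hasDerivWithinAt_Afun (hY : ∀ x, MeasurableSet {u | Y u = x}) {s : ℝ}
    (hrc : ∀ᶠ u in 𝓝[≥] s, Y u = Y s) (hs : 0 ≤ s) :
    HasDerivWithinAt (Afun Y) (Locc Y (Y s) s)⁻¹ (Ici s) s := by
  have hsum : ∑ x, (if Y s = x then 1 else 0) / Locc Y x s = (Locc Y (Y s) s)⁻¹ := by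
    simp [ite_div]
  have h := HasDerivWithinAt.fun_sum (u := Finset.univ)
    fun x _ => hasDerivWithinAt_log_Locc hY hrc hs x
  rwa [hsum] at h

lemma occupation_comp_Afun (hY : ∀ x, MeasurableSet {u | Y u = x})
    (hrc : ∀ t, ∀ᶠ u in 𝓝[≥] t, Y u = Y t) {X : ℝ → V}
    (hX : ∀ x, MeasurableSet {u | X u = x}) (hXrc : ∀ t, ∀ᶠ u in 𝓝[≥] t, X u = X t)
    (hXY : ∀ s ≥ 0, X (Afun Y s) = Y s) {s : ℝ} (hs : 0 ≤ s) (x : V) :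
    occupation X x (Afun Y s) = log (Locc Y x s) := by
  refine eq_of_has_deriv_right_eq (fun σ hσ => ?_)
    (fun σ hσ => hasDerivWithinAt_log_Locc hY (hrc σ) hσ.1 x)
    ((continuous_occupation hX x).comp (continuous_Afun hY)).continuousOn
    (continuous_log_Locc hY x).continuousOn (by simp [Afun_zero, occupation, Locc])
    s ⟨hs, le_rfl⟩
  have hmaps : MapsTo (Afun Y) (Ici σ) (Ici (Afun Y σ)) := fun u hu =>
    (strictMonoOn_Afun hY).monotoneOn hσ.1 (hσ.1.trans hu) hu
  have h := (hasDerivWithinAt_occupation hX (hXrc _) (Afun_nonneg σ) x).scomp σ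
    (hasDerivWithinAt_Afun hY (hrc σ) hσ.1) hmaps
  rw [hXY σ hσ.1] at h
  convert h using 1
  by_cases hσx : Y σ = x <;> simp [hσx, div_eq_inv_mul]

lemma sum_exp_occupation_comp_Afun_sub_one (hY : ∀ x, MeasurableSet {u | Y u = x})
    (hrc : ∀ t, ∀ᶠ u in 𝓝[≥] t, Y u = Y t) {X : ℝ → V}
    (hX : ∀ x, MeasurableSet {u | X u = x}) (hXrc : ∀ t, ∀ᶠ u in 𝓝[≥] t, X u = X t)
    (hXY : ∀ s ≥ 0, X (Afun Y s) = Y s) {s : ℝ} (hs : 0 ≤ s) :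
    ∑ i, (exp (occupation X i (Afun Y s)) - 1) = s := by
  simp_rw [occupation_comp_Afun hY hrc hX hXrc hXY hs, exp_log (Locc_pos _ _), Locc_sub_one]
  exact sum_occupation hY hs

end Clock

section Inverse

variable {g : ℝ → ℝ}

lemma monotone_comp_max_zero {f : ℝ → ℝ} (hf : StrictMonoOn f (Ici 0))
    (hg : MapsTo g (Ici 0) (Ici 0)) (hfg : RightInvOn g f (Ici 0)) :
    Monotone fun u => g (max u 0) := by
  intro u v huv
  have hu : max u 0 ∈ Ici 0 := le_max_right u 0
  have hv : max v 0 ∈ Ici 0 := le_max_right v 0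
  rw [← hf.le_iff_le (hg hu) (hg hv), hfg hu, hfg hv]
  exact max_le_max_right 0 huv

lemma continuousWithinAt_Ici_comp_max_zero (hmono : Monotone fun u => g (max u 0))
    (hg : MapsTo g (Ici 0) (Ici 0)) (hg' : SurjOn g (Ici 0) (Ici 0)) (t : ℝ) :
    ContinuousWithinAt (fun u => g (max u 0)) (Ici t) t := by
  refine continuousWithinAt_right_of_monotoneOn_of_image_mem_nhdsWithin (hmono.monotoneOn univ)
    univ_mem (mem_of_superset self_mem_nhdsWithin fun s (hs : _ ≤ s) => ?_)
  obtain ⟨r, hr, rfl⟩ := hg' ((hg (le_max_right t 0)).trans hs)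
  exact ⟨r, mem_univ r, by simp only [max_eq_left (show (0 : ℝ) ≤ r from hr)]⟩

end Inverse

/-- Theorem (deterministic time-change identity, Lemma 1 of Sabot–Tarrès): for a
right-continuous path `Y` with finitely many jumps on compact intervals, `A` is a
continuous strictly increasing bijection from `[0,∞)` onto `[0,∞)` and, for any inverse
`B` of `A` on `[0,∞)`, one has `T_x(A(s)) = log L_x(s)` and
`A⁻¹(t) = ∫₀^t e^{T_{X_u}(u)} du = Σ_i (e^{T_i(t)} - 1)`. -/
theorem time_change_identity (Y : ℝ → V)
    (hrc : ∀ t : ℝ, ∃ ε > 0, ∀ s ∈ Set.Ico t (t + ε), Y s = Y t)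
    (hjumps : ∀ a b : ℝ,
      {t ∈ Set.Icc a b | ¬ ∃ ε > 0, ∀ s ∈ Set.Ioo (t - ε) (t + ε), Y s = Y t}.Finite) :
    ContinuousOn (Afun Y) (Set.Ici 0) ∧
    StrictMonoOn (Afun Y) (Set.Ici 0) ∧
    Afun Y '' Set.Ici 0 = Set.Ici 0 ∧
    ∀ B : ℝ → ℝ,
      (∀ s ∈ Set.Ici (0 : ℝ), B (Afun Y s) = s) →
      (∀ t ∈ Set.Ici (0 : ℝ), Afun Y (B t) = t) →
      ((∀ x : V, ∀ s ∈ Set.Ici (0 : ℝ), occT Y B x (Afun Y s) = Real.log (Locc Y x s)) ∧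
       (∀ t ∈ Set.Ici (0 : ℝ),
          B t = ∫ u in Set.Ioc (0 : ℝ) t, Real.exp (occT Y B (Y (B u)) u)) ∧
       (∀ t ∈ Set.Ici (0 : ℝ), B t = ∑ i : V, (Real.exp (occT Y B i t) - 1))) := by
  have hY := measurableSet_setOf_eq_of_finite_jumps hjumps
  have hYrc : ∀ t, ∀ᶠ u in 𝓝[≥] t, Y u = Y t := fun t => by
    obtain ⟨ε, hε, hconst⟩ := hrc t
    exact mem_of_superset (Ico_mem_nhdsGE (lt_add_of_pos_right t hε)) hconst
  have : Nonempty V := ⟨Y 0⟩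
  have hA := strictMonoOn_Afun hY
  have hA_image := image_Afun_Ici hY
  refine ⟨(continuous_Afun hY).continuousOn, hA, hA_image, fun B hBA hAB => ?_⟩
  have hB_maps : MapsTo B (Ici 0) (Ici 0) := LeftInvOn.mapsTo hBA hA_image.superset
  have hφ := monotone_comp_max_zero hA hB_maps hAB
  -- `B` is only pinned down on `[0, ∞)`; clamping makes the time change monotone on all of `ℝ`
  -- (hence measurable) without changing `occT Y B` on `(0, t]`.
  set X : ℝ → V := fun u => Y (B (max u 0))
  have hX : ∀ x, MeasurableSet {u | X u = x} := fun x => hφ.measurable (hY x)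
  have hB_surj : SurjOn B (Ici 0) (Ici 0) := LeftInvOn.surjOn hBA fun s _ => Afun_nonneg s
  have hXrc : ∀ t, ∀ᶠ u in 𝓝[≥] t, X u = X t :=
    eventually_nhdsGE_comp_eq hYrc hφ (continuousWithinAt_Ici_comp_max_zero hφ hB_maps hB_surj)
  have hXY : ∀ s ≥ 0, X (Afun Y s) = Y s := fun s hs => by
    simp only [X, max_eq_left (Afun_nonneg s), hBA s hs]
  have hocc : occT Y B = occupation X :=
    funext fun i => occupation_congr (fun u hu => by simp only [X, max_eq_left hu.le]) i
  have hsum : ∀ t ∈ Ici (0 : ℝ), B t = ∑ i, (exp (occT Y B i t) - 1) := by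
    intro t ht
    obtain ⟨s, hs, rfl⟩ := hA_image.superset ht
    rw [hBA s hs, hocc, sum_exp_occupation_comp_Afun_sub_one hY hYrc hX hXrc hXY hs]
  refine ⟨fun x s hs => hocc ▸ occupation_comp_Afun hY hYrc hX hXrc hXY hs x,
    fun t ht => ?_, hsum⟩
  rw [hsum t ht, hocc, sum_exp_occupation_sub_one hX hXrc ht]
  refine setIntegral_congr_fun measurableSet_Ioc fun u hu => ?_
  simp only [X, max_eq_left hu.1.le]
end
end
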